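/- arXiv:2306.05592 — 6 statements merged into one kernel-verified Lean document; each statement's English description precedes it below -/
import Mathlib

section
/- Let M₀ and M be symmetric positive semidefinite d×d matrices with M positive definite, M ⪰ M₀, and suppose A ∈ ℝ^{d×r} has orthonormal columns whose column space contains the column space of M₀. Then Aᵀ M⁻¹ A ⪯ (Aᵀ M₀ A)⁻¹, provided Aᵀ M₀ A is invertible. -/
open Matrix

/-- Conjugation preserves positive semidefiniteness (real version). -/
lemma psd_conj {n m : ℕ} {X : Matrix (Fin n) (Fin n) ℝ} (hX : X.PosSemidef)
    (B : Matrix (Fin n) (Fin m) ℝ) : (Bᵀ * X * B).PosSemidef := by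
  simpa [conjTranspose_eq_transpose_of_trivial] using hX.conjTranspose_mul_mul_same B

/-- If `0 ⪯ T ⪯ 1` then `T * T ⪯ T`. -/
lemma psd_sub_sq {n : ℕ} {T : Matrix (Fin n) (Fin n) ℝ} (hT : T.PosSemidef)
    (h1T : ((1 : Matrix (Fin n) (Fin n) ℝ) - T).PosSemidef) :
    (T - T * T).PosSemidef := by
  obtain ⟨S, hSsym, hSS⟩ : ∃ S : Matrix (Fin n) (Fin n) ℝ, Sᵀ = S ∧ S * S = T := by
    open scoped MatrixOrder in
    refine ⟨CFC.sqrt T, ?_, CFC.sqrt_mul_sqrt_self T hT.nonneg⟩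
    open scoped MatrixOrder in
    have := (CFC.sqrt_nonneg T).posSemidef.isHermitian
    exact (by simpa [conjTranspose_eq_transpose_of_trivial] using this : (CFC.sqrt T).IsSymm).eq
  have h := psd_conj h1T S
  rw [hSsym] at h
  have heq : S * (1 - T) * S = T - T * T := by
    rw [mul_sub, sub_mul, mul_one, hSS]
    congr 1
    rw [← hSS]
    simp [mul_assoc]
  rwa [heq] at h

lemma key_lemma {d : ℕ} (M₀ M : Matrix (Fin d) (Fin d) ℝ)
    (hM₀ : M₀.PosSemidef) (hM : M.PosDef) (hle : (M - M₀).PosSemidef) :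
    (M₀ - M₀ * M⁻¹ * M₀).PosSemidef := by
  obtain ⟨R, hRsym, hRR, hRpsd⟩ :
      ∃ R : Matrix (Fin d) (Fin d) ℝ, Rᵀ = R ∧ R * R = M ∧ R.PosSemidef := by
    open scoped MatrixOrder in
    refine ⟨CFC.sqrt M, ?_, CFC.sqrt_mul_sqrt_self M hM.posSemidef.nonneg,
      (CFC.sqrt_nonneg M).posSemidef⟩
    open scoped MatrixOrder in
    have := (CFC.sqrt_nonneg M).posSemidef.isHermitian
    exact (by simpa [conjTranspose_eq_transpose_of_trivial] using this : (CFC.sqrt M).IsSymm).eq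
  have hRdet : IsUnit R.det := by
    have hdet : R.det * R.det = M.det := by rw [← det_mul, hRR]
    refine isUnit_iff_ne_zero.2 fun h => ?_
    rw [h, mul_zero] at hdet
    exact hM.det_pos.ne' hdet.symm
  have hRinv1 : R * R⁻¹ = 1 := mul_nonsing_inv R hRdet
  have hRinv2 : R⁻¹ * R = 1 := nonsing_inv_mul R hRdet
  have e1 : ∀ X : Matrix (Fin d) (Fin d) ℝ, R * (R⁻¹ * X) = X := fun X => by
    rw [← mul_assoc, hRinv1, one_mul]
  have e2 : ∀ X : Matrix (Fin d) (Fin d) ℝ, R⁻¹ * (R * X) = X := fun X => by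
    rw [← mul_assoc, hRinv2, one_mul]
  have hRinvsym : (R⁻¹)ᵀ = R⁻¹ := by rw [transpose_nonsing_inv, hRsym]
  have hMinv : M⁻¹ = R⁻¹ * R⁻¹ := by rw [← hRR, Matrix.mul_inv_rev]
  have hTpsd : (R⁻¹ * M₀ * R⁻¹).PosSemidef := by
    have := psd_conj hM₀ R⁻¹
    rwa [hRinvsym] at this
  have h1T : ((1 : Matrix (Fin d) (Fin d) ℝ) - R⁻¹ * M₀ * R⁻¹).PosSemidef := by
    have h := psd_conj hle R⁻¹
    rw [hRinvsym] at h
    have heq : R⁻¹ * (M - M₀) * R⁻¹ = 1 - R⁻¹ * M₀ * R⁻¹ := by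
      rw [mul_sub, sub_mul, ← hRR]
      congr 1
      simp [mul_assoc, e2, hRinv1]
    rwa [heq] at h
  have hTT := psd_sub_sq hTpsd h1T
  have h := psd_conj hTT R
  rw [hRsym] at h
  have heq : R * (R⁻¹ * M₀ * R⁻¹ - R⁻¹ * M₀ * R⁻¹ * (R⁻¹ * M₀ * R⁻¹)) * R
      = M₀ - M₀ * M⁻¹ * M₀ := by
    rw [mul_sub, sub_mul, hMinv]
    congr 1
    · simp [mul_assoc, e1, hRinv2]
    · simp [mul_assoc, e1, hRinv2]
  rwa [heq] at h

theorem compressed_inverse_loewner {d r : ℕ}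
    (M₀ M : Matrix (Fin d) (Fin d) ℝ) (A : Matrix (Fin d) (Fin r) ℝ)
    (hM₀ : M₀.PosSemidef) (hM : M.PosDef) (hle : (M - M₀).PosSemidef)
    (hA : Aᵀ * A = 1) (hproj : A * Aᵀ * M₀ = M₀)
    (hinv : IsUnit (Aᵀ * M₀ * A)) :
    ((Aᵀ * M₀ * A)⁻¹ - Aᵀ * M⁻¹ * A).PosSemidef := by
  have key := key_lemma M₀ M hM₀ hM hle
  have hM0sym : M₀ᵀ = M₀ := by
    have := hM₀.isHermitian
    exact (by simpa [conjTranspose_eq_transpose_of_trivial] using this : M₀.IsSymm).eq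
  have hBsym : (Aᵀ * M₀ * A)ᵀ = Aᵀ * M₀ * A := by
    rw [transpose_mul, transpose_mul, transpose_transpose, hM0sym]
    exact (Matrix.mul_assoc _ _ _).symm
  have hBdet : IsUnit (Aᵀ * M₀ * A).det := (isUnit_iff_isUnit_det _).1 hinv
  have hBinv1 : (Aᵀ * M₀ * A) * (Aᵀ * M₀ * A)⁻¹ = 1 := mul_nonsing_inv _ hBdet
  have hBinvsym : ((Aᵀ * M₀ * A)⁻¹)ᵀ = (Aᵀ * M₀ * A)⁻¹ := by
    rw [transpose_nonsing_inv, hBsym]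
  have hproj' : M₀ * (A * Aᵀ) = M₀ := by
    have := congrArg transpose hproj
    simpa [transpose_mul, hM0sym, mul_assoc] using this
  have hABA : A * (Aᵀ * M₀ * A) * Aᵀ = M₀ := by
    have : (A * Aᵀ * M₀) * (A * Aᵀ) = M₀ := by rw [hproj, hproj']
    calc A * (Aᵀ * M₀ * A) * Aᵀ = (A * Aᵀ * M₀) * (A * Aᵀ) := by
          simp [Matrix.mul_assoc]
      _ = M₀ := this
  have hM0K : M₀ * (A * (Aᵀ * M₀ * A)⁻¹) = A := by
    calc M₀ * (A * (Aᵀ * M₀ * A)⁻¹)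
        = (A * (Aᵀ * M₀ * A) * Aᵀ) * (A * (Aᵀ * M₀ * A)⁻¹) := by rw [hABA]
      _ = A * ((Aᵀ * M₀ * A) * ((Aᵀ * A) * (Aᵀ * M₀ * A)⁻¹)) := by
          simp [Matrix.mul_assoc]
      _ = A * ((Aᵀ * M₀ * A) * (Aᵀ * M₀ * A)⁻¹) := by rw [hA, Matrix.one_mul]
      _ = A := by rw [hBinv1, Matrix.mul_one]
  have h := psd_conj key (A * (Aᵀ * M₀ * A)⁻¹)
  have heq : (A * (Aᵀ * M₀ * A)⁻¹)ᵀ * (M₀ - M₀ * M⁻¹ * M₀) * (A * (Aᵀ * M₀ * A)⁻¹)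
      = (Aᵀ * M₀ * A)⁻¹ - Aᵀ * M⁻¹ * A := by
    rw [Matrix.mul_sub, Matrix.sub_mul]
    congr 1
    · calc (A * (Aᵀ * M₀ * A)⁻¹)ᵀ * M₀ * (A * (Aᵀ * M₀ * A)⁻¹)
          = ((Aᵀ * M₀ * A)⁻¹)ᵀ * (Aᵀ * M₀ * A) * (Aᵀ * M₀ * A)⁻¹ := by
            rw [transpose_mul]
            simp [Matrix.mul_assoc]
        _ = (Aᵀ * M₀ * A)⁻¹ := by
            rw [hBinvsym, mul_assoc, hBinv1, mul_one]
    · calc (A * (Aᵀ * M₀ * A)⁻¹)ᵀ * (M₀ * M⁻¹ * M₀) * (A * (Aᵀ * M₀ * A)⁻¹)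
          = (M₀ * (A * (Aᵀ * M₀ * A)⁻¹))ᵀ * M⁻¹ * (M₀ * (A * (Aᵀ * M₀ * A)⁻¹)) := by
            rw [transpose_mul M₀ (A * (Aᵀ * M₀ * A)⁻¹), hM0sym]
            simp [Matrix.mul_assoc]
        _ = Aᵀ * M⁻¹ * A := by rw [hM0K]
  rwa [heq] at h
end

section
/- Let M₀ and M be symmetric positive semidefinite d×d matrices with M positive definite, M ⪰ M₀, and let A ∈ ℝ^{d×r} have orthonormal columns whose column space contains the range of M₀, with Aᵀ M₀ A invertible. Then log det (Aᵀ M⁻¹ A) ≤ − log det (Aᵀ M₀ A). -/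
open Matrix

private lemma real_herm_transpose {n : Type*} [Fintype n] {S : Matrix n n ℝ}
    (h : S.IsHermitian) : Sᵀ = S := by
  rw [← conjTranspose_eq_transpose_of_trivial]; exact h

private lemma posDef_of_isUnit {n : ℕ} {B : Matrix (Fin n) (Fin n) ℝ}
    (h : B.PosSemidef) (hu : IsUnit B) : B.PosDef := by
  refine .of_dotProduct_mulVec_pos h.1 fun x hx => lt_of_le_of_ne (h.dotProduct_mulVec_nonneg x) fun heq => hx ?_
  have h0 : B *ᵥ x = 0 := (h.dotProduct_mulVec_zero_iff x).mp heq.symm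
  have hinj := Matrix.mulVec_injective_iff_isUnit.mpr hu
  exact hinj (by simpa using h0)

private lemma det_one_add_psd {n : ℕ} {E : Matrix (Fin n) (Fin n) ℝ}
    (hE : E.PosSemidef) : 1 ≤ (1 + E).det := by
  set U : Matrix (Fin n) (Fin n) ℝ := (hE.1.eigenvectorUnitary : Matrix (Fin n) (Fin n) ℝ)
  have hU : U * star U = 1 := Matrix.mem_unitaryGroup_iff.mp hE.1.eigenvectorUnitary.2
  have hsp : E = U * diagonal (RCLike.ofReal ∘ hE.1.eigenvalues) * star U :=
    hE.1.spectral_theorem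
  have key : (1 : Matrix (Fin n) (Fin n) ℝ) + E
      = U * (1 + diagonal (RCLike.ofReal ∘ hE.1.eigenvalues)) * star U := by
    rw [Matrix.mul_add, Matrix.add_mul, Matrix.mul_one, hU, ← hsp]
  rw [key, det_mul, det_mul, mul_comm (det U), mul_assoc, ← det_mul, hU, det_one, mul_one]
  have hdiag : (1 : Matrix (Fin n) (Fin n) ℝ) + diagonal (RCLike.ofReal ∘ hE.1.eigenvalues)
      = diagonal (fun i => 1 + hE.1.eigenvalues i) := by
    rw [← Matrix.diagonal_one, diagonal_add]
    rfl
  rw [hdiag, det_diagonal]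
  calc (1:ℝ) = ∏ _i : Fin n, 1 := by simp
    _ ≤ ∏ i, (1 + hE.1.eigenvalues i) :=
      Finset.prod_le_prod (fun i _ => zero_le_one)
        (fun i _ => le_add_of_nonneg_right (hE.eigenvalues_nonneg i))

open scoped MatrixOrder in
private lemma det_mono_psd {n : ℕ} {P Q : Matrix (Fin n) (Fin n) ℝ}
    (hQ : Q.PosDef) (h : (P - Q).PosSemidef) : Q.det ≤ P.det := by
  classical
  set S := CFC.sqrt Q with hSdef
  have hS : S.PosSemidef := (CFC.sqrt_nonneg Q).posSemidef
  have hSS : S * S = Q := CFC.sqrt_mul_sqrt_self Q hQ.posSemidef.nonneg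
  have hdetS : S.det * S.det = Q.det := by rw [← det_mul, hSS]
  have hdetQ : 0 < Q.det := hQ.det_pos
  have hdS : S.det ≠ 0 := by
    intro h0; rw [h0, mul_zero] at hdetS; exact hdetQ.ne' hdetS.symm
  have hSinv : S * S⁻¹ = 1 := Matrix.mul_nonsing_inv S hdS.isUnit
  have hSinv' : S⁻¹ * S = 1 := Matrix.nonsing_inv_mul S hdS.isUnit
  have hSh : S⁻¹ᴴ = S⁻¹ := by
    rw [conjTranspose_nonsing_inv, hS.1]
  have hE : (S⁻¹ * (P - Q) * S⁻¹).PosSemidef := by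
    have := h.mul_mul_conjTranspose_same S⁻¹
    rwa [hSh] at this
  have hPeq : P = S * (1 + S⁻¹ * (P - Q) * S⁻¹) * S := by
    rw [Matrix.mul_add, Matrix.mul_one, Matrix.add_mul, hSS]
    have : S * (S⁻¹ * (P - Q) * S⁻¹) * S = P - Q := by
      rw [← Matrix.mul_assoc, ← Matrix.mul_assoc, hSinv, Matrix.one_mul,
        Matrix.mul_assoc, hSinv', Matrix.mul_one]
    rw [this]; abel
  have hPdet : P.det = S.det * (1 + S⁻¹ * (P - Q) * S⁻¹).det * S.det := by
    conv_lhs => rw [hPeq]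
    rw [det_mul, det_mul]
  have h1 := det_one_add_psd hE
  have hSdpos : 0 < S.det * S.det := by rw [hdetS]; exact hdetQ
  rw [hPdet, ← hdetS]
  nlinarith [sq_nonneg S.det]

theorem log_det_compressed_inverse_le {d r : ℕ}
    (M₀ M : Matrix (Fin d) (Fin d) ℝ) (A : Matrix (Fin d) (Fin r) ℝ)
    (hM₀ : M₀.PosSemidef) (hM : M.PosDef) (hle : (M - M₀).PosSemidef)
    (hA : Aᵀ * A = 1) (hproj : A * Aᵀ * M₀ = M₀)
    (hinv : IsUnit (Aᵀ * M₀ * A)) :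
    Real.log (Aᵀ * M⁻¹ * A).det ≤ - Real.log (Aᵀ * M₀ * A).det := by
  classical
  have hAconj : Aᴴ = Aᵀ := conjTranspose_eq_transpose_of_trivial A
  set B := Aᵀ * M₀ * A with hBdef
  set X := Aᵀ * M⁻¹ * A with hXdef
  -- B is positive definite
  have hBpsd : B.PosSemidef := by
    have := hM₀.conjTranspose_mul_mul_same A
    rwa [hAconj] at this
  have hBpd : B.PosDef := posDef_of_isUnit hBpsd hinv
  -- M₀ = A * B * Aᵀ
  have hM₀symm : M₀ * (A * Aᵀ) = M₀ := by
    have := congrArg Matrix.transpose hproj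
    rwa [Matrix.transpose_mul, Matrix.transpose_mul, Matrix.transpose_transpose,
      real_herm_transpose hM₀.1] at this
  have hM0eq : M₀ = A * B * Aᵀ := by
    rw [hBdef]
    calc M₀ = M₀ * (A * Aᵀ) := hM₀symm.symm
      _ = (A * Aᵀ * M₀) * (A * Aᵀ) := by rw [hproj]
      _ = A * (Aᵀ * M₀ * A) * Aᵀ := by
          simp only [Matrix.mul_assoc]
  -- M inverse facts
  have hMdet : M.det ≠ 0 := hM.det_pos.ne'
  have hMinv : M⁻¹ * M = 1 := Matrix.nonsing_inv_mul M hMdet.isUnit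
  have hMinvM : ∀ Z : Matrix (Fin d) (Fin r) ℝ, M⁻¹ * (M * Z) = Z := fun Z => by
    rw [← Matrix.mul_assoc, hMinv, Matrix.one_mul]
  have hMinvT : M⁻¹ᵀ = M⁻¹ := by
    rw [Matrix.transpose_nonsing_inv, real_herm_transpose hM.1]
  -- X is positive definite
  have hXpsd : X.PosSemidef := by
    have := hM.inv.posSemidef.conjTranspose_mul_mul_same A
    rwa [hAconj] at this
  have hXpd : X.PosDef := by
    refine .of_dotProduct_mulVec_pos hXpsd.1 fun x hx => ?_
    have hAx : A *ᵥ x ≠ 0 := by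
      intro h0
      apply hx
      have hxx : Aᵀ *ᵥ (A *ᵥ x) = x := by
        rw [Matrix.mulVec_mulVec, hA, Matrix.one_mulVec]
      rw [← hxx, h0, Matrix.mulVec_zero]
    have := hM.inv.dotProduct_mulVec_pos (x := A *ᵥ x) (by simpa using hAx)
    calc (0:ℝ) < star (A *ᵥ x) ⬝ᵥ M⁻¹ *ᵥ (A *ᵥ x) := this
      _ = star x ⬝ᵥ X *ᵥ x := by
          rw [hXdef, ← Matrix.mulVec_mulVec, ← Matrix.mulVec_mulVec]
          simp only [star_trivial]
          rw [Matrix.dotProduct_mulVec x Aᵀ, Matrix.vecMul_transpose,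
            Matrix.dotProduct_mulVec (A *ᵥ x) M⁻¹]
  have hXdet : 0 < X.det := hXpd.det_pos
  have hXdne : X.det ≠ 0 := hXdet.ne'
  have hXinv : X⁻¹ * X = 1 := Matrix.nonsing_inv_mul X hXdne.isUnit
  have hXinv' : X * X⁻¹ = 1 := Matrix.mul_nonsing_inv X hXdne.isUnit
  have hXinvT : X⁻¹ᴴ = X⁻¹ := by
    rw [conjTranspose_nonsing_inv, hXpd.1]
  -- X - X*B*X is PSD
  have hpsd1 : (X - X * B * X).PosSemidef := by
    have hconj := hle.conjTranspose_mul_mul_same (M⁻¹ * A)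
    have heq : (M⁻¹ * A)ᴴ * (M - M₀) * (M⁻¹ * A) = X - X * B * X := by
      rw [conjTranspose_eq_transpose_of_trivial, Matrix.transpose_mul, hMinvT,
        hM0eq, hXdef]
      rw [Matrix.mul_sub, Matrix.sub_mul]
      congr 1
      · calc Aᵀ * M⁻¹ * M * (M⁻¹ * A) = Aᵀ * (M⁻¹ * (M * (M⁻¹ * A))) := by
              simp only [Matrix.mul_assoc]
          _ = Aᵀ * (M⁻¹ * A) := by rw [hMinvM]
          _ = Aᵀ * M⁻¹ * A := by rw [Matrix.mul_assoc]
      · simp only [Matrix.mul_assoc]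
    rwa [heq] at hconj
  -- X⁻¹ - B is PSD
  have hpsd2 : (X⁻¹ - B).PosSemidef := by
    have hconj := hpsd1.conjTranspose_mul_mul_same X⁻¹
    have heq : X⁻¹ᴴ * (X - X * B * X) * X⁻¹ = X⁻¹ - B := by
      rw [hXinvT, Matrix.mul_sub, Matrix.sub_mul]
      congr 1
      · rw [hXinv, Matrix.one_mul]
      · calc X⁻¹ * (X * B * X) * X⁻¹ = (X⁻¹ * X) * B * (X * X⁻¹) := by
              simp only [Matrix.mul_assoc]
          _ = B := by rw [hXinv, hXinv', Matrix.one_mul, Matrix.mul_one]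
    rwa [heq] at hconj
  -- determinant comparison
  have hdet : B.det ≤ X⁻¹.det := det_mono_psd hBpd hpsd2
  rw [Matrix.det_nonsing_inv] at hdet
  have hBdet : 0 < B.det := hBpd.det_pos
  have hprod : X.det * B.det ≤ 1 := by
    have := mul_le_mul_of_nonneg_left hdet hXdet.le
    rwa [Ring.inverse_eq_inv', mul_inv_cancel₀ hXdne] at this
  have hlog : Real.log (X.det * B.det) ≤ 0 :=
    Real.log_nonpos (by positivity) hprod
  rw [Real.log_mul hXdne hBdet.ne'] at hlog
  linarith
end

section
/- Let x₁,…,xₙ ∈ ℝ^d and let M(w) = Σᵢ wᵢ xᵢxᵢᵀ for w in the set of weight vectors where M(w) is positive definite. Then the partial derivative of w ↦ −log det(Aᵀ M(w)⁻¹ A) with respect to wₗ equals xₗᵀ M(w)⁻¹ xₗ, provided xₗ lies in the column space of A, where A ∈ ℝ^{d×r} has orthonormal columns. -/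
open Matrix

variable {d : ℕ}

lemma vecMulVec_mul' {m k p : Type*} [Fintype k] (a : m → ℝ) (b : k → ℝ)
    (P : Matrix k p ℝ) : vecMulVec a b * P = vecMulVec a (b ᵥ* P) := by
  ext i j
  simp [mul_apply, vecMulVec_apply, vecMul, dotProduct, Finset.mul_sum, mul_assoc]

lemma mul_vecMulVec' {m k p : Type*} [Fintype k] (a : k → ℝ) (b : p → ℝ)
    (P : Matrix m k ℝ) : P * vecMulVec a b = vecMulVec (P *ᵥ a) b := by
  ext i j
  simp [mul_apply, vecMulVec_apply, mulVec, dotProduct, Finset.sum_mul, mul_assoc]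

lemma vecMulVec_mul_vecMulVec {m k p : Type*} [Fintype k] (a : m → ℝ) (b c : k → ℝ)
    (e : p → ℝ) : vecMulVec a b * vecMulVec c e = (b ⬝ᵥ c) • vecMulVec a e := by
  ext i j
  simp [mul_apply, vecMulVec_apply, dotProduct, Finset.sum_mul, Finset.mul_sum]
  congr 1; ext k; ring

lemma smul_vecMulVec' {m k : Type*} (c : ℝ) (a : m → ℝ) (b : k → ℝ) :
    c • vecMulVec a b = vecMulVec (c • a) b := by
  ext i j; simp [vecMulVec_apply, mul_assoc]

lemma row_mul_mul_col {m : Type*} [Fintype m] (a b : m → ℝ) (P : Matrix m m ℝ) :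
    (replicateRow Unit a * P * replicateCol Unit b) default default = a ⬝ᵥ (P *ᵥ b) := by
  simp only [mul_apply, replicateRow_apply, replicateCol_apply, dotProduct, mulVec, Finset.sum_mul,
    Finset.mul_sum]
  rw [Finset.sum_comm]
  exact Finset.sum_congr rfl fun j _ => Finset.sum_congr rfl fun k _ => by ring

lemma posDef_conj {r : ℕ} (A : Matrix (Fin d) (Fin r) ℝ) (hA : Aᵀ * A = 1)
    {N : Matrix (Fin d) (Fin d) ℝ} (hN : N.PosDef) : (Aᵀ * N * A).PosDef := by
  rw [posDef_iff_dotProduct_mulVec]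
  constructor
  · have := isHermitian_conjTranspose_mul_mul A hN.1
    rwa [conjTranspose_eq_transpose_of_trivial] at this
  · intro v hv
    have hAv : A *ᵥ v ≠ 0 := by
      intro h
      apply hv
      have : Aᵀ *ᵥ (A *ᵥ v) = v := by rw [mulVec_mulVec, hA, one_mulVec]
      rw [h, mulVec_zero] at this
      exact this.symm
    have := hN.dotProduct_mulVec_pos hAv
    simpa [star_trivial, ← mulVec_mulVec, dotProduct_mulVec, vecMul_transpose,
      Matrix.mul_assoc] using this

lemma sherman {M : Matrix (Fin d) (Fin d) ℝ} (hM : IsUnit M.det) (xv : Fin d → ℝ) (s : ℝ)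
    (h1 : 1 + s * (xv ⬝ᵥ M⁻¹ *ᵥ xv) ≠ 0) :
    (M + s • vecMulVec xv xv) *
      (M⁻¹ - (s / (1 + s * (xv ⬝ᵥ M⁻¹ *ᵥ xv))) • (M⁻¹ * vecMulVec xv xv * M⁻¹)) = 1 := by
  set N := M⁻¹ with hN
  set q := xv ⬝ᵥ N *ᵥ xv with hq
  set X := vecMulVec xv xv with hX
  set c := s / (1 + s * q) with hc
  have hMN : M * N = 1 := Matrix.mul_nonsing_inv M hM
  have hXNX : X * N * X = q • X := by
    rw [hX, vecMulVec_mul', _root_.vecMulVec_mul_vecMulVec, ← Matrix.dotProduct_mulVec]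
  have hc0 : s - c - s * c * q = 0 := by
    rw [hc]; field_simp; ring
  calc (M + s • X) * (N - c • (N * X * N))
      = M * N - c • (M * N * X * N) + (s • (X * N) - (s * c * q) • (X * N)) := by
        simp only [Matrix.add_mul, Matrix.mul_sub, Matrix.mul_smul, Matrix.smul_mul,
          smul_smul, ← Matrix.mul_assoc, hXNX]
        module
    _ = 1 + (s - c - s * c * q) • (X * N) := by
        rw [hMN, Matrix.one_mul]
        module
    _ = 1 := by rw [hc0, zero_smul, add_zero]

theorem deriv_neg_log_det_local_info {n d r : ℕ}
    (x : Fin n → Fin d → ℝ) (A : Matrix (Fin d) (Fin r) ℝ)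
    (hA : Aᵀ * A = 1) (w : Fin n → ℝ) (l : Fin n)
    (hxl : (A * Aᵀ) *ᵥ x l = x l)
    (hpd : (∑ i, w i • vecMulVec (x i) (x i)).PosDef) :
    HasDerivAt
      (fun t : ℝ =>
        - Real.log
          (Aᵀ * (∑ i, (Function.update w l t) i • vecMulVec (x i) (x i))⁻¹ * A).det)
      (x l ⬝ᵥ (∑ i, w i • vecMulVec (x i) (x i))⁻¹ *ᵥ x l) (w l) := by
  set M := ∑ i, w i • vecMulVec (x i) (x i) with hM
  set N := M⁻¹ with hN
  set X := vecMulVec (x l) (x l) with hX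
  set q := x l ⬝ᵥ N *ᵥ x l with hq
  have hMu : IsUnit M.det := hpd.det_pos.ne'.isUnit
  have hNpd : N.PosDef := hpd.inv
  have hNsymm : Nᵀ = N := by
    have := hNpd.1
    rwa [IsHermitian, conjTranspose_eq_transpose_of_trivial] at this
  have hAAsymm : (A * Aᵀ)ᵀ = A * Aᵀ := by rw [transpose_mul, transpose_transpose]
  set B := Aᵀ * N * A with hB
  have hBpd : B.PosDef := posDef_conj A hA hNpd
  have hBu : IsUnit B.det := hBpd.det_pos.ne'.isUnit
  set u := Aᵀ *ᵥ x l with hu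
  have ha : (Aᵀ * N) *ᵥ x l = B *ᵥ u := by
    conv_lhs => rw [← hxl]
    rw [mulVec_mulVec, hu, mulVec_mulVec, hB, Matrix.mul_assoc, Matrix.mul_assoc,
      Matrix.mul_assoc]
  have hBuu : (B *ᵥ u) ⬝ᵥ u = q := by
    rw [← ha]
    calc (Aᵀ * N) *ᵥ x l ⬝ᵥ u
        = u ⬝ᵥ ((Aᵀ * N) *ᵥ x l) := dotProduct_comm _ _
      _ = (x l ᵥ* A) ⬝ᵥ ((Aᵀ * N) *ᵥ x l) := by rw [hu, mulVec_transpose]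
      _ = x l ⬝ᵥ (A *ᵥ ((Aᵀ * N) *ᵥ x l)) := (dotProduct_mulVec _ _ _).symm
      _ = x l ⬝ᵥ ((A * Aᵀ) *ᵥ (N *ᵥ x l)) := by
          rw [mulVec_mulVec, ← Matrix.mul_assoc, ← mulVec_mulVec]
      _ = (x l ᵥ* (A * Aᵀ)) ⬝ᵥ (N *ᵥ x l) := dotProduct_mulVec _ _ _
      _ = q := by
          rw [← hAAsymm, vecMul_transpose, hxl, hq]
  have hsum : ∀ t : ℝ, ∑ i, Function.update w l t i • vecMulVec (x i) (x i)
      = M + (t - w l) • X := by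
    intro t
    have h1 : ∑ i, Function.update w l t i • vecMulVec (x i) (x i)
        = ∑ i, (w i • vecMulVec (x i) (x i)
            + (if i = l then (t - w l) • X else 0)) := by
      refine Finset.sum_congr rfl fun i _ => ?_
      by_cases h : i = l
      · subst h
        rw [Function.update_self, if_pos rfl, ← hX, ← add_smul]
        ring_nf
      · rw [Function.update_of_ne h, if_neg h, add_zero]
    rw [h1, Finset.sum_add_distrib, Finset.sum_ite_eq' Finset.univ l, if_pos (Finset.mem_univ l),
      ← hM]
  have hdet : ∀ t : ℝ, 0 < 1 + (t - w l) * q →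
      (Aᵀ * (M + (t - w l) • X)⁻¹ * A).det = B.det * (1 + (t - w l) * q)⁻¹ := by
    intro t ht
    set s := t - w l with hs
    have h1' : 1 + s * q ≠ 0 := ht.ne'
    have hinv : (M + s • X)⁻¹ = N - (s / (1 + s * q)) • (N * X * N) :=
      inv_eq_right_inv (sherman hMu (x l) s h1')
    set c := s / (1 + s * q) with hc
    have hx2 : x l ᵥ* (N * A) = B *ᵥ u := by
      rw [show N * A = (Aᵀ * N)ᵀ by rw [transpose_mul, hNsymm, transpose_transpose],
        vecMul_transpose, ha]
    have hconj : Aᵀ * (N - c • (N * X * N)) * A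
        = B - c • vecMulVec (B *ᵥ u) (B *ᵥ u) := by
      rw [Matrix.mul_sub, Matrix.sub_mul, Matrix.mul_smul, Matrix.smul_mul, ← hB]
      congr 2
      have e1 : Aᵀ * (N * X * N) * A = (Aᵀ * N) * X * (N * A) := by
        simp only [Matrix.mul_assoc]
      rw [e1, hX, mul_vecMulVec', vecMulVec_mul', ha, hx2]
    rw [hinv, hconj]
    have hrw : B - c • vecMulVec (B *ᵥ u) (B *ᵥ u)
        = B + replicateCol Unit ((-c) • (B *ᵥ u)) * replicateRow Unit (B *ᵥ u) := by
      rw [sub_eq_add_neg, ← neg_smul, smul_vecMulVec', vecMulVec_eq Unit]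
    rw [hrw, det_add_replicateCol_mul_replicateRow hBu]
    congr 1
    rw [det_unique, Matrix.add_apply, Matrix.one_apply_eq, row_mul_mul_col]
    have hBinv : B⁻¹ *ᵥ ((-c) • (B *ᵥ u)) = (-c) • u := by
      rw [mulVec_smul, mulVec_mulVec, nonsing_inv_mul B hBu, one_mulVec]
    rw [hBinv, dotProduct_smul, hBuu, smul_eq_mul, hc]
    field_simp
    ring
  have hev : ∀ᶠ t in nhds (w l), 0 < 1 + (t - w l) * q := by
    have hc : ContinuousAt (fun t : ℝ => 1 + (t - w l) * q) (w l) := by fun_prop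
    have h1 : Filter.Tendsto (fun t : ℝ => 1 + (t - w l) * q) (nhds (w l)) (nhds 1) := by
      simpa using hc.tendsto
    exact h1.eventually (eventually_gt_nhds zero_lt_one)
  have heq : (fun t : ℝ =>
        - Real.log (Aᵀ * (∑ i, (Function.update w l t) i • vecMulVec (x i) (x i))⁻¹ * A).det)
      =ᶠ[nhds (w l)] fun t => Real.log (1 + (t - w l) * q) - Real.log B.det := by
    filter_upwards [hev] with t ht
    rw [hsum t, hdet t ht, Real.log_mul hBpd.det_pos.ne' (inv_ne_zero ht.ne'),
      Real.log_inv]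
    ring
  have hd1 : HasDerivAt (fun t : ℝ => 1 + (t - w l) * q) q (w l) := by
    simpa using (((hasDerivAt_id (w l)).sub_const (w l)).mul_const q).const_add 1
  have hd2 : HasDerivAt (fun t : ℝ => Real.log (1 + (t - w l) * q)) q (w l) := by
    have := hd1.log (by simp : (1:ℝ) + (w l - w l) * q ≠ 0)
    simpa using this
  exact (hd2.sub_const (Real.log B.det)).congr_of_eventuallyEq heq
end

section
/- Let x₁,…,xₙ ∈ ℝ^d and A ∈ ℝ^{d×r} with orthonormal columns such that every xᵢ with i in an index set G lies in the range of AAᵀ. Then the function f(w) = −log det(Aᵀ M(w)⁻¹ A), where M(w) = Σᵢ wᵢxᵢxᵢᵀ, is concave in the coordinates (wᵢ)_{i ∈ G} on the region where M(w) is positive definite, with the remaining coordinates held fixed. -/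
open Matrix

private lemma posDef_conj' {d e : ℕ} {Y : Matrix (Fin d) (Fin d) ℝ} (hY : Y.PosDef)
    (B : Matrix (Fin d) (Fin e) ℝ) (hB : ∀ u : Fin e → ℝ, B *ᵥ u = 0 → u = 0) :
    (Bᵀ * Y * B).PosDef := by
  have h := (hY.posSemidef.conjTranspose_mul_mul_same B).1
  rw [conjTranspose_eq_transpose_of_trivial] at h
  refine PosDef.of_dotProduct_mulVec_pos h fun u hu => ?_
  have hBu : B *ᵥ u ≠ 0 := fun h0 => hu (hB u h0)
  have := hY.dotProduct_mulVec_pos hBu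
  rw [← conjTranspose_eq_transpose_of_trivial]
  simpa only [star_mulVec, dotProduct_mulVec, vecMul_vecMul] using this

private lemma posDef_smul' {d : ℕ} {X : Matrix (Fin d) (Fin d) ℝ} (hX : X.PosDef) {a : ℝ}
    (ha : 0 < a) : (a • X).PosDef := by
  refine PosDef.of_dotProduct_mulVec_pos ?_ fun u hu => ?_
  · unfold Matrix.IsHermitian
    rw [conjTranspose_smul, hX.1.eq]
    simp
  · simp only [smul_mulVec, dotProduct_smul, smul_eq_mul]
    exact mul_pos ha (hX.dotProduct_mulVec_pos hu)

private lemma mul_vecMulVec'_s6 {d e : ℕ} (B : Matrix (Fin e) (Fin d) ℝ) (u v : Fin d → ℝ) :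
    B * vecMulVec u v = vecMulVec (B *ᵥ u) v := by
  ext i j
  simp [mul_apply, vecMulVec_apply, mulVec, dotProduct, Finset.sum_mul, mul_assoc]

private lemma det_smul_one_add_smul' {d : ℕ} {Z : Matrix (Fin d) (Fin d) ℝ} (hZ : Z.PosDef)
    {a b : ℝ} (ha : 0 ≤ a) (hb : 0 ≤ b) (hab : a + b = 1) :
    Z.det ^ b ≤ (a • (1 : Matrix (Fin d) (Fin d) ℝ) + b • Z).det := by
  classical
  set μ := hZ.1.eigenvalues with hμdef
  have hμ : ∀ i, 0 < μ i := hZ.eigenvalues_pos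
  set U : Matrix (Fin d) (Fin d) ℝ := (hZ.1.eigenvectorUnitary : Matrix (Fin d) (Fin d) ℝ)
    with hUdef
  have hU : U * star U = 1 := mem_unitaryGroup_iff.mp hZ.1.eigenvectorUnitary.2
  have hsp : Z = U * diagonal μ * star U := by
    have := hZ.1.spectral_theorem
    rwa [RCLike.ofReal_real_eq_id, Function.id_comp] at this
  have key : a • (1 : Matrix (Fin d) (Fin d) ℝ) + b • Z
      = U * (a • 1 + b • diagonal μ) * star U := by
    rw [hsp, Matrix.mul_add, Matrix.add_mul, Matrix.mul_smul, Matrix.mul_smul,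
      Matrix.smul_mul, Matrix.smul_mul, Matrix.mul_one, hU]
  have hdiag : a • (1 : Matrix (Fin d) (Fin d) ℝ) + b • diagonal μ
      = diagonal (fun i => a + b * μ i) := by
    ext i j
    rcases eq_or_ne i j with rfl | h
    · simp
    · simp [Matrix.one_apply_ne h, diagonal_apply_ne _ h]
  have hdet : (a • (1 : Matrix (Fin d) (Fin d) ℝ) + b • Z).det
      = ∏ i, (a + b * μ i) := by
    rw [key, det_mul_right_comm, hU, Matrix.one_mul, hdiag, det_diagonal]
  rw [hdet, hZ.1.det_eq_prod_eigenvalues]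
  simp only [RCLike.ofReal_real_eq_id, id_eq, ← hμdef]
  rw [← Real.finset_prod_rpow _ _ (fun i _ => (hμ i).le)]
  refine Finset.prod_le_prod (fun i _ => Real.rpow_nonneg (hμ i).le _) (fun i _ => ?_)
  have := Real.geom_mean_le_arith_mean2_weighted ha hb zero_le_one (hμ i).le hab
  simpa using this

open scoped MatrixOrder in
private lemma det_rpow_le_det_smul_add_smul' {d : ℕ} {X Y : Matrix (Fin d) (Fin d) ℝ}
    (hX : X.PosDef) (hY : Y.PosDef) {a b : ℝ} (ha : 0 ≤ a) (hb : 0 ≤ b) (hab : a + b = 1) :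
    X.det ^ a * Y.det ^ b ≤ (a • X + b • Y).det := by
  classical
  rcases ha.eq_or_lt with rfl | ha'
  · rw [zero_add] at hab; subst hab
    simp [Real.rpow_zero, Real.rpow_one]
  rcases hb.eq_or_lt with rfl | hb'
  · rw [add_zero] at hab; subst hab
    simp [Real.rpow_zero, Real.rpow_one]
  set S := CFC.sqrt X with hSdef
  have hSS : S * S = X := CFC.sqrt_mul_sqrt_self X hX.posSemidef.nonneg
  have hSh : Sᵀ = S := by
    have := (CFC.sqrt_nonneg X).posSemidef.1
    rw [← conjTranspose_eq_transpose_of_trivial]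
    exact this
  have hSdet : S.det ≠ 0 := by
    intro h0
    have : X.det = 0 := by rw [← hSS, det_mul, h0, zero_mul]
    exact hX.det_pos.ne' this
  have hS1 : S * S⁻¹ = 1 := mul_nonsing_inv S (isUnit_iff_ne_zero.mpr hSdet)
  have hS2 : S⁻¹ * S = 1 := nonsing_inv_mul S (isUnit_iff_ne_zero.mpr hSdet)
  have hSinvT : (S⁻¹)ᵀ = S⁻¹ := by rw [transpose_nonsing_inv, hSh]
  set Z := S⁻¹ * Y * S⁻¹ with hZdef
  have hZ : Z.PosDef := by
    have := posDef_conj' hY S⁻¹ (fun u hu => by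
      have := congrArg (fun t => S *ᵥ t) hu
      simpa [mulVec_mulVec, hS1] using this)
    rwa [hSinvT] at this
  have hsplit : a • X + b • Y = S * (a • 1 + b • Z) * S := by
    rw [Matrix.mul_add, Matrix.add_mul, Matrix.mul_smul, Matrix.mul_smul,
      Matrix.smul_mul, Matrix.smul_mul, Matrix.mul_one, hSS, hZdef]
    congr 1
    rw [Matrix.mul_assoc, Matrix.mul_assoc, hS2, Matrix.mul_one, ← Matrix.mul_assoc, hS1,
      Matrix.one_mul]
  have hdet2 : (a • X + b • Y).det
      = X.det * (a • (1 : Matrix (Fin d) (Fin d) ℝ) + b • Z).det := by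
    rw [hsplit, det_mul, det_mul, mul_comm S.det, mul_assoc, ← det_mul, hSS]
    ring
  have hZdet : Z.det = Y.det / X.det := by
    rw [hZdef, det_mul, det_mul, det_nonsing_inv, Ring.inverse_eq_inv', ← hSS, det_mul]
    field_simp
  have hkey := det_smul_one_add_smul' hZ ha hb hab
  have hXpos := hX.det_pos
  have hYpos := hY.det_pos
  calc X.det ^ a * Y.det ^ b = X.det * Z.det ^ b := by
        rw [hZdet, Real.div_rpow hYpos.le hXpos.le]
        rw [show (a : ℝ) = 1 - b by linarith, Real.rpow_sub hXpos, Real.rpow_one]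
        field_simp
    _ ≤ X.det * (a • (1 : Matrix (Fin d) (Fin d) ℝ) + b • Z).det :=
        mul_le_mul_of_nonneg_left hkey hXpos.le
    _ = (a • X + b • Y).det := hdet2.symm

private lemma det_conj_inv_eq' {d r : ℕ} (A : Matrix (Fin d) (Fin r) ℝ) (hA : Aᵀ * A = 1)
    {M : Matrix (Fin d) (Fin d) ℝ} (hM : M.PosDef) :
    (Aᵀ * M⁻¹ * A).det = ((1 - A * Aᵀ) * M + A * Aᵀ).det * M.det⁻¹ := by
  have hMdet : IsUnit M.det := isUnit_iff_ne_zero.mpr hM.det_pos.ne'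
  have hM1 : M * M⁻¹ = 1 := mul_nonsing_inv M hMdet
  have key : ((1 - A * Aᵀ) * M + A * Aᵀ) * M⁻¹ = 1 + A * (Aᵀ * M⁻¹ - Aᵀ) := by
    simp only [Matrix.add_mul, Matrix.sub_mul, Matrix.one_mul, Matrix.mul_sub,
      Matrix.mul_assoc, hM1, Matrix.mul_one]
    abel
  have h2 : (1 + A * (Aᵀ * M⁻¹ - Aᵀ)).det = (Aᵀ * M⁻¹ * A).det := by
    rw [det_one_add_mul_comm, Matrix.sub_mul, hA, add_sub_cancel]
  have := congrArg det key
  rw [det_mul, det_nonsing_inv, Ring.inverse_eq_inv'] at this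
  rw [← h2, ← this]

theorem concave_neg_log_det_local_info {n d r : ℕ}
    (x : Fin n → Fin d → ℝ) (A : Matrix (Fin d) (Fin r) ℝ)
    (hA : Aᵀ * A = 1) (G : Finset (Fin n))
    (hx : ∀ i ∈ G, (A * Aᵀ) *ᵥ x i = x i) (w : Fin n → ℝ) :
    ConcaveOn ℝ
      {v : Fin n → ℝ | (∀ i, 0 ≤ v i) ∧ (∀ i ∉ G, v i = w i) ∧
        (∑ i, v i • vecMulVec (x i) (x i)).PosDef}
      (fun v =>
        - Real.log (Aᵀ * (∑ i, v i • vecMulVec (x i) (x i))⁻¹ * A).det) := by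
  classical
  set s := {v : Fin n → ℝ | (∀ i, 0 ≤ v i) ∧ (∀ i ∉ G, v i = w i) ∧
      (∑ i, v i • vecMulVec (x i) (x i)).PosDef} with hsdef
  set M : (Fin n → ℝ) → Matrix (Fin d) (Fin d) ℝ :=
    fun v => ∑ i, v i • vecMulVec (x i) (x i) with hMdef
  have hMlin : ∀ (a b : ℝ) (v y : Fin n → ℝ), M (a • v + b • y) = a • M v + b • M y := by
    intro a b v y
    rw [hMdef]
    simp only [Finset.smul_sum, ← Finset.sum_add_distrib]
    refine Finset.sum_congr rfl fun i _ => ?_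
    simp only [Pi.add_apply, Pi.smul_apply, smul_eq_mul, add_smul]
    module
  set N : Matrix (Fin d) (Fin d) ℝ :=
    ∑ i, (if i ∈ G then 0 else w i) • vecMulVec (x i) (x i) with hNdef
  set c : ℝ := ((1 - A * Aᵀ) * N + A * Aᵀ).det with hcdef
  have hproj : ∀ v ∈ s, (1 - A * Aᵀ) * M v = (1 - A * Aᵀ) * N := by
    intro v hv
    rw [hMdef, hNdef, Matrix.mul_sum, Matrix.mul_sum]
    refine Finset.sum_congr rfl fun i _ => ?_
    rw [Matrix.mul_smul, Matrix.mul_smul, mul_vecMulVec'_s6]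
    by_cases hi : i ∈ G
    · have hxi : (1 - A * Aᵀ) *ᵥ x i = 0 := by
        rw [sub_mulVec, one_mulVec, hx i hi, sub_self]
      rw [hxi]
      have hz : vecMulVec (0 : Fin d → ℝ) (x i) = 0 := by
        ext a b
        simp [vecMulVec_apply]
      rw [hz]
      simp [hi]
    · rw [hv.2.1 i hi]
      simp [hi]
  have hAinj : ∀ u : Fin r → ℝ, A *ᵥ u = 0 → u = 0 := by
    intro u hu
    have : (Aᵀ * A) *ᵥ u = Aᵀ *ᵥ (A *ᵥ u) := by rw [mulVec_mulVec]
    rw [hA, one_mulVec, hu, mulVec_zero] at this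
    exact this
  -- the key pointwise identity
  have heq : ∀ v ∈ s, - Real.log (Aᵀ * (M v)⁻¹ * A).det
      = Real.log (M v).det - Real.log c := by
    intro v hv
    have hPD : (M v).PosDef := hv.2.2
    have hdpos : 0 < (M v).det := hPD.det_pos
    have hid := det_conj_inv_eq' A hA hPD
    rw [hproj v hv] at hid
    have hApos : 0 < (Aᵀ * (M v)⁻¹ * A).det := (posDef_conj' hPD.inv A hAinj).det_pos
    have hcpos : 0 < c := by
      have h2 : c = (Aᵀ * (M v)⁻¹ * A).det * (M v).det := by
        rw [hid, ← hcdef]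
        field_simp
      rw [h2]
      exact mul_pos hApos hdpos
    rw [hid, Real.log_mul hcpos.ne' (inv_ne_zero hdpos.ne'), Real.log_inv]
    ring
  -- convexity of the set
  have hconv : Convex ℝ s := by
    intro v hv y hy a b ha hb hab
    refine ⟨fun i => add_nonneg (mul_nonneg ha (hv.1 i)) (mul_nonneg hb (hy.1 i)),
      fun i hi => ?_, ?_⟩
    · simp only [Pi.add_apply, Pi.smul_apply, smul_eq_mul, hv.2.1 i hi, hy.2.1 i hi]
      rw [← add_mul, hab, one_mul]
    · have : (∑ i, (a • v + b • y) i • vecMulVec (x i) (x i)) = a • M v + b • M y :=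
        hMlin a b v y
      rw [this]
      rcases ha.eq_or_lt with rfl | ha'
      · rw [zero_add] at hab; subst hab
        simpa using hy.2.2
      rcases hb.eq_or_lt with rfl | hb'
      · rw [add_zero] at hab; subst hab
        simpa using hv.2.2
      exact (posDef_smul' hv.2.2 ha').add (posDef_smul' hy.2.2 hb')
  refine ⟨hconv, fun v hv y hy a b ha hb hab => ?_⟩
  have hmem : a • v + b • y ∈ s := hconv hv hy ha hb hab
  show a • (- Real.log (Aᵀ * (M v)⁻¹ * A).det) + b • (- Real.log (Aᵀ * (M y)⁻¹ * A).det)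
      ≤ - Real.log (Aᵀ * (M (a • v + b • y))⁻¹ * A).det
  rw [heq v hv, heq y hy, heq _ hmem, hMlin]
  have hX : (M v).PosDef := hv.2.2
  have hY : (M y).PosDef := hy.2.2
  have hXpos := hX.det_pos
  have hYpos := hY.det_pos
  have hle := det_rpow_le_det_smul_add_smul' hX hY ha hb hab
  have hprodpos : 0 < (M v).det ^ a * (M y).det ^ b :=
    mul_pos (Real.rpow_pos_of_pos hXpos a) (Real.rpow_pos_of_pos hYpos b)
  have hlog : a * Real.log (M v).det + b * Real.log (M y).det
      ≤ Real.log (a • M v + b • M y).det := by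
    have h1 : Real.log ((M v).det ^ a * (M y).det ^ b)
        = a * Real.log (M v).det + b * Real.log (M y).det := by
      rw [Real.log_mul (Real.rpow_pos_of_pos hXpos a).ne' (Real.rpow_pos_of_pos hYpos b).ne',
        Real.log_rpow hXpos, Real.log_rpow hYpos]
    rw [← h1]
    exact Real.log_le_log hprodpos hle
  simp only [smul_eq_mul]
  have hexp : a * (Real.log (M v).det - Real.log c) + b * (Real.log (M y).det - Real.log c)
      = a * Real.log (M v).det + b * Real.log (M y).det - Real.log c := by
    linear_combination (-(Real.log c)) * hab
  rw [hexp]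
  linarith
end

section
/- Let x₁,…,xₙ ∈ ℝ^d and suppose index sets G_k, G_l ⊂ [n] satisfy: every xⱼxⱼᵀ with j ∈ G_l can be written as Σ_{i∈G_k} αᵢ xᵢxᵢᵀ with αᵢ ≥ 0 and Σ_{i∈G_k} αᵢ < 1. If w ∈ ℝⁿ₊ with M(w) ≻ 0 satisfies xⱼᵀ M(w)⁻¹ xⱼ = c for some j ∈ G_l and xᵢᵀ M(w)⁻¹ xᵢ ≤ c for all i ∈ G_k (for some c > 0), then a contradiction arises; i.e., no such j exists and hence w_{G_l} = 0 at any such stationary point. -/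
/-!
The quadratic form `v ↦ vᵀ A v` depends on `v` only through `v vᵀ`, and linearly so. Hence if
`x_j x_jᵀ = ∑_{i ∈ G_k} α_i x_i x_iᵀ`, the leverage `x_jᵀ M(w)⁻¹ x_j` is the same conic combination
of the leverages `x_iᵀ M(w)⁻¹ x_i ≤ c`, so it is at most `(∑ α_i) c < c`.
-/

open Matrix

section

variable {ι m R : Type*}

theorem Matrix.dotProduct_mulVec_self_eq_trace_mul_vecMulVec [Fintype m] [CommSemiring R]
    (A : Matrix m m R) (v : m → R) :
    v ⬝ᵥ A *ᵥ v = trace (A * vecMulVec v v) := by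
  rw [mul_vecMulVec, trace_vecMulVec, dotProduct_comm]

theorem Matrix.dotProduct_mulVec_self_eq_sum_of_vecMulVec_eq_sum [Fintype m] [CommSemiring R]
    (A : Matrix m m R) {y : m → R} {x : ι → m → R} {s : Finset ι} {α : ι → R}
    (h : vecMulVec y y = ∑ i ∈ s, α i • vecMulVec (x i) (x i)) :
    y ⬝ᵥ A *ᵥ y = ∑ i ∈ s, α i * (x i ⬝ᵥ A *ᵥ x i) := by
  simp only [dotProduct_mulVec_self_eq_trace_mul_vecMulVec, h, Matrix.mul_sum, trace_sum,
    Matrix.mul_smul, trace_smul, smul_eq_mul]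

theorem Finset.sum_mul_lt_of_le_of_sum_lt_one [CommSemiring R] [PartialOrder R]
    [IsStrictOrderedRing R] {s : Finset ι} {α q : ι → R} {c : R}
    (hα : ∀ i ∈ s, 0 ≤ α i) (hsum : ∑ i ∈ s, α i < 1) (hq : ∀ i ∈ s, q i ≤ c) (hc : 0 < c) :
    ∑ i ∈ s, α i * q i < c :=
  calc ∑ i ∈ s, α i * q i ≤ ∑ i ∈ s, α i * c :=
        Finset.sum_le_sum fun i hi => mul_le_mul_of_nonneg_left (hq i hi) (hα i hi)
    _ = (∑ i ∈ s, α i) * c := (Finset.sum_mul s α c).symm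
    _ < 1 * c := mul_lt_mul_of_pos_right hsum hc
    _ = c := one_mul c

end

theorem free_riding_by_diversity_general {n d : ℕ}
    (x : Fin n → Fin d → ℝ) (Gk Gl : Finset (Fin n))
    (hcover : ∀ j ∈ Gl, ∃ α : Fin n → ℝ, (∀ i, 0 ≤ α i) ∧
      (∑ i ∈ Gk, α i) < 1 ∧
      vecMulVec (x j) (x j) = ∑ i ∈ Gk, α i • vecMulVec (x i) (x i))
    (w : Fin n → ℝ)
    (c : ℝ) (hc : 0 < c)
    (j : Fin n) (hj : j ∈ Gl)
    (hstatj : x j ⬝ᵥ (∑ i, w i • vecMulVec (x i) (x i))⁻¹ *ᵥ x j = c)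
    (hstatk : ∀ i ∈ Gk,
      x i ⬝ᵥ (∑ i', w i' • vecMulVec (x i') (x i'))⁻¹ *ᵥ x i ≤ c) :
    False := by
  obtain ⟨α, hα, hαsum, hrep⟩ := hcover j hj
  have hlt := Finset.sum_mul_lt_of_le_of_sum_lt_one (fun i _ => hα i) hαsum hstatk hc
  rw [← dotProduct_mulVec_self_eq_sum_of_vecMulVec_eq_sum _ hrep, hstatj] at hlt
  exact lt_irrefl c hlt

theorem free_riding_by_diversity {n d : ℕ}
    (x : Fin n → Fin d → ℝ) (Gk Gl : Finset (Fin n))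
    (hcover : ∀ j ∈ Gl, ∃ α : Fin n → ℝ, (∀ i, 0 ≤ α i) ∧
      (∑ i ∈ Gk, α i) < 1 ∧
      vecMulVec (x j) (x j) = ∑ i ∈ Gk, α i • vecMulVec (x i) (x i))
    (w : Fin n → ℝ) (hw : ∀ i, 0 ≤ w i)
    (hpd : (∑ i, w i • vecMulVec (x i) (x i)).PosDef)
    (c : ℝ) (hc : 0 < c)
    (j : Fin n) (hj : j ∈ Gl)
    (hstatj : x j ⬝ᵥ (∑ i, w i • vecMulVec (x i) (x i))⁻¹ *ᵥ x j = c)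
    (hstatk : ∀ i ∈ Gk,
      x i ⬝ᵥ (∑ i', w i' • vecMulVec (x i') (x i'))⁻¹ *ᵥ x i ≤ c) :
    False :=
  free_riding_by_diversity_general x Gk Gl hcover w c hc j hj hstatj hstatk
end

section
/- Let f: S₊ᵈ → ℝ ∪ {−∞} satisfy f(λM) = λᵖ f(M) + g(λ) for all λ > 0 and all psd M, for some p ∈ ℝ and g: ℝ → ℝ. Fix vectors z₁,…,zₘ ∈ ℝ^r spanning ℝ^r and cost c > 0, and consider u(w) = f((Σᵢ wᵢ zᵢzᵢᵀ)⁻¹) − c Σᵢ wᵢ over w ∈ ℝᵐ₊ (with u(w) = −∞ when the matrix is singular). If w* maximizes u and u(w*) > −∞, then w*/‖w*‖₁ maximizes π ↦ f((Σᵢ πᵢ zᵢzᵢᵀ)⁻¹) over the probability simplex. -/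
open Matrix

private lemma psd_smul' {r : ℕ} {M : Matrix (Fin r) (Fin r) ℝ} (hM : M.PosSemidef)
    {s : ℝ} (hs : 0 ≤ s) : (s • M).PosSemidef := by
  refine Matrix.PosSemidef.of_dotProduct_mulVec_nonneg ?_ fun x => ?_
  · unfold Matrix.IsHermitian
    rw [conjTranspose_smul, hM.1]
    simp
  · rw [smul_mulVec, dotProduct_smul, smul_eq_mul]
    exact mul_nonneg hs (hM.dotProduct_mulVec_nonneg x)

private lemma psd_sum' {m r : ℕ} (z : Fin m → Fin r → ℝ) (π : Fin m → ℝ)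
    (hπ : ∀ i, 0 ≤ π i) : (∑ i, π i • vecMulVec (z i) (z i)).PosSemidef := by
  refine Matrix.PosSemidef.of_dotProduct_mulVec_nonneg ?_ fun x => ?_
  · show (∑ i, π i • vecMulVec (z i) (z i))ᴴ = _
    ext i j
    simp only [conjTranspose_apply, Matrix.sum_apply, Matrix.smul_apply,
      vecMulVec_apply, smul_eq_mul, star_trivial]
    exact Finset.sum_congr rfl fun k _ => by ring
  · have hmv : (∑ i, π i • vecMulVec (z i) (z i)) *ᵥ x
        = ∑ i, (π i * (z i ⬝ᵥ x)) • z i := by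
      have h1 : (∑ i, π i • vecMulVec (z i) (z i)) *ᵥ x
          = ∑ i, (π i • vecMulVec (z i) (z i)) *ᵥ x := by
        ext j
        simp only [mulVec, dotProduct, Matrix.sum_apply, Finset.sum_apply, Finset.sum_mul]
        rw [Finset.sum_comm]
      rw [h1]
      refine Finset.sum_congr rfl fun i _ => ?_
      ext j
      simp only [mulVec, dotProduct, vecMulVec_apply, Matrix.smul_apply,
        Pi.smul_apply, smul_eq_mul, Finset.mul_sum, Finset.sum_mul]
      exact Finset.sum_congr rfl fun k _ => by ring
    rw [hmv]
    have h2 : star x ⬝ᵥ ∑ i, (π i * (z i ⬝ᵥ x)) • z i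
        = ∑ i, star x ⬝ᵥ ((π i * (z i ⬝ᵥ x)) • z i) := by
      simp only [dotProduct, Finset.sum_apply, Finset.mul_sum]
      rw [Finset.sum_comm]
    rw [h2]
    refine Finset.sum_nonneg fun i _ => ?_
    have h3 : star x ⬝ᵥ ((π i * (z i ⬝ᵥ x)) • z i) = π i * ((z i ⬝ᵥ x) * (z i ⬝ᵥ x)) := by
      simp only [dotProduct, Pi.smul_apply, smul_eq_mul, star_trivial, Finset.mul_sum,
        Finset.sum_mul]
      refine Finset.sum_congr rfl fun k _ => ?_
      refine Finset.sum_congr rfl fun l _ => ?_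
      ring
    rw [h3]
    exact mul_nonneg (hπ i) (mul_self_nonneg _)

private lemma posdef_of_psd_isUnit {r : ℕ} {M : Matrix (Fin r) (Fin r) ℝ}
    (hM : M.PosSemidef) (hU : IsUnit M) : M.PosDef := by
  refine Matrix.PosDef.of_dotProduct_mulVec_pos hM.1 fun x hx => ?_
  rcases lt_or_eq_of_le (hM.dotProduct_mulVec_nonneg x) with h | h
  · exact h
  · exfalso
    apply hx
    have h0 : M *ᵥ x = 0 := (hM.dotProduct_mulVec_zero_iff x).mp h.symm
    have hdet : IsUnit M.det := (Matrix.isUnit_iff_isUnit_det M).mp hU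
    calc x = (M⁻¹ * M) *ᵥ x := by rw [Matrix.nonsing_inv_mul M hdet, Matrix.one_mulVec]
    _ = M⁻¹ *ᵥ (M *ᵥ x) := by rw [Matrix.mulVec_mulVec]
    _ = 0 := by rw [h0, Matrix.mulVec_zero]

theorem isolated_agent_follows_optimal_design {m r : ℕ}
    (f : Matrix (Fin r) (Fin r) ℝ → ℝ) (p : ℝ) (g : ℝ → ℝ)
    (hhom : ∀ lam : ℝ, 0 < lam → ∀ M : Matrix (Fin r) (Fin r) ℝ, M.PosSemidef →
      f (lam • M) = lam ^ p * f M + g lam)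
    (z : Fin m → Fin r → ℝ)
    (hspan : Submodule.span ℝ (Set.range z) = ⊤)
    (c : ℝ) (hc : 0 < c)
    (w : Fin m → ℝ) (hw : ∀ i, 0 ≤ w i)
    (hwpd : (∑ i, w i • vecMulVec (z i) (z i)).PosDef)
    (hmax : ∀ v : Fin m → ℝ, (∀ i, 0 ≤ v i) →
      IsUnit (∑ i, v i • vecMulVec (z i) (z i)) →
      f ((∑ i, v i • vecMulVec (z i) (z i))⁻¹) - c * ∑ i, v i ≤
        f ((∑ i, w i • vecMulVec (z i) (z i))⁻¹) - c * ∑ i, w i) :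
    ∀ π : Fin m → ℝ, (∀ i, 0 ≤ π i) → (∑ i, π i = 1) →
      IsUnit (∑ i, π i • vecMulVec (z i) (z i)) →
      f ((∑ i, π i • vecMulVec (z i) (z i))⁻¹) ≤
        f ((∑ i, (w i / ∑ j, w j) • vecMulVec (z i) (z i))⁻¹) := by
  intro π hπ hπ1 hπu
  rcases Nat.eq_zero_or_pos r with hr | hr
  · subst hr
    exact le_of_eq (congrArg f (Subsingleton.elim _ _))
  set Aπ := ∑ i, π i • vecMulVec (z i) (z i) with hAπ
  set Aw := ∑ i, w i • vecMulVec (z i) (z i) with hAw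
  set s := ∑ j, w j with hs
  -- s > 0
  have hs0 : 0 < s := by
    rcases lt_or_eq_of_le (Finset.sum_nonneg fun i _ => hw i) with h | h
    · exact h
    · exfalso
      have hall : ∀ i ∈ Finset.univ, w i = 0 :=
        (Finset.sum_eq_zero_iff_of_nonneg fun i _ => hw i).mp h.symm
      have hz : Aw = 0 := by
        rw [hAw]
        refine Finset.sum_eq_zero fun i hi => ?_
        rw [hall i hi, zero_smul]
      have := hwpd.dotProduct_mulVec_pos (x := Pi.single ⟨0, hr⟩ 1) (by
        intro hcon
        have := congrFun hcon ⟨0, hr⟩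
        simp at this)
      rw [hz] at this
      simp at this
  have hsne : s ≠ 0 := ne_of_gt hs0
  haveI : Invertible s := invertibleOfNonzero hsne
  -- the target matrix equals s⁻¹ • Aw
  have htarget : (∑ i, (w i / s) • vecMulVec (z i) (z i)) = s⁻¹ • Aw := by
    rw [hAw, Finset.smul_sum]
    refine Finset.sum_congr rfl fun i _ => ?_
    rw [smul_smul, div_eq_inv_mul]
  -- apply hmax with v = s • π
  have hvsum : ∑ i, s * π i = s := by rw [← Finset.mul_sum, hπ1, mul_one]
  have hAv : (∑ i, (s * π i) • vecMulVec (z i) (z i)) = s • Aπ := by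
    rw [hAπ, Finset.smul_sum]
    refine Finset.sum_congr rfl fun i _ => ?_
    rw [smul_smul]
  have hdetπ : IsUnit Aπ.det := (Matrix.isUnit_iff_isUnit_det Aπ).mp hπu
  have hdetw : IsUnit Aw.det := (Matrix.isUnit_iff_isUnit_det Aw).mp hwpd.isUnit
  have hsAπu : IsUnit (s • Aπ) := by
    rw [Matrix.isUnit_iff_isUnit_det, Matrix.det_smul]
    exact (IsUnit.pow _ (isUnit_iff_ne_zero.mpr hsne)).mul hdetπ
  have hmain := hmax (fun i => s * π i) (fun i => mul_nonneg (le_of_lt hs0) (hπ i))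
    (by rw [hAv]; exact hsAπu)
  rw [hAv, hvsum] at hmain
  have hineq : f ((s • Aπ)⁻¹) ≤ f (Aw⁻¹) := by linarith
  -- rewrite inverses
  have hinv1 : (s • Aπ)⁻¹ = s⁻¹ • Aπ⁻¹ := by
    rw [Aπ.inv_smul s hdetπ, invOf_eq_inv]
  have hinv2 : (s⁻¹ • Aw)⁻¹ = s • Aw⁻¹ := by
    haveI : Invertible s⁻¹ := invertibleOfNonzero (inv_ne_zero hsne)
    rw [Aw.inv_smul s⁻¹ hdetw, invOf_eq_inv, inv_inv]
  have hAwinv : Aw⁻¹ = s⁻¹ • (s • Aw⁻¹) := by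
    rw [smul_smul, inv_mul_cancel₀ hsne, one_smul]
  -- PSD facts
  have hπpsd : Aπ.PosSemidef := psd_sum' z π hπ
  have hπpd : Aπ.PosDef := posdef_of_psd_isUnit hπpsd hπu
  have hπinvpsd : (Aπ⁻¹).PosSemidef := hπpd.inv.posSemidef
  have hwinvpsd : (s • Aw⁻¹).PosSemidef := psd_smul' hwpd.inv.posSemidef (le_of_lt hs0)
  have hsinv : (0:ℝ) < s⁻¹ := inv_pos.mpr hs0
  rw [hinv1] at hineq
  rw [hAwinv] at hineq
  rw [hhom s⁻¹ hsinv _ hπinvpsd, hhom s⁻¹ hsinv _ hwinvpsd] at hineq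
  have hpow : (0:ℝ) < s⁻¹ ^ p := Real.rpow_pos_of_pos hsinv p
  have hfinal : f (Aπ⁻¹) ≤ f (s • Aw⁻¹) := by
    have := sub_nonneg.mpr hineq
    nlinarith
  rw [htarget, hinv2]
  exact hfinal
end
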